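/- arXiv:2105.11762 — 5 statements merged into one kernel-verified Lean document; each statement's English description precedes it below -/
import Mathlib

section
/- Let m ≥ 2 be an even integer and define Q_m(y) = ∑_{j=0}^{m} C(m,j)·(j+1)!·y^j. Then Q_m(y) > 0 for all real y. -/
open Finset MeasureTheory Set

theorem stmt_0 (m : ℕ) (hm : 2 ≤ m) (hme : Even m) (y : ℝ) :
    0 < ∑ j ∈ Finset.range (m + 1), (m.choose j : ℝ) * (j + 1).factorial * y ^ j := by
  have hrw : ∀ j : ℕ, ∀ t : ℝ, 0 < t →
      Real.exp (-t) * t ^ (((j:ℝ)+2) - 1) = Real.exp (-t) * t ^ (j+1) := by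
    intro j t ht
    congr 1
    rw [show ((j:ℝ)+2) - 1 = ((j+1 : ℕ) : ℝ) by push_cast; ring, Real.rpow_natCast]
  have hfact : ∀ j : ℕ, ((j+1).factorial : ℝ)
      = ∫ t in Ioi (0:ℝ), Real.exp (-t) * t ^ (j+1) := by
    intro j
    have h1 : Real.Gamma ((j:ℝ) + 2) = ((j+1).factorial : ℝ) := by
      have h := Real.Gamma_nat_eq_factorial (j+1)
      rw [← h]
      congr 1
      push_cast
      ring
    have h2 := Real.Gamma_eq_integral (s := (j:ℝ)+2) (by positivity)
    rw [h2] at h1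
    rw [← h1]
    refine setIntegral_congr_fun measurableSet_Ioi fun t ht => ?_
    exact hrw j t ht
  have hint : ∀ j : ℕ, IntegrableOn (fun t => Real.exp (-t) * t ^ (j+1)) (Ioi (0:ℝ)) := by
    intro j
    have h := Real.GammaIntegral_convergent (s := (j:ℝ)+2) (by positivity)
    exact h.congr_fun (fun t ht => hrw j t ht) measurableSet_Ioi
  have hpt : ∀ t : ℝ,
      (∑ j ∈ range (m+1), (m.choose j : ℝ) * y ^ j * (Real.exp (-t) * t ^ (j+1)))
        = Real.exp (-t) * t * (t*y+1)^m := by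
    intro t
    rw [add_pow, Finset.mul_sum]
    refine Finset.sum_congr rfl fun j hj => ?_
    rw [one_pow]
    ring
  have hswap :
      ∑ j ∈ Finset.range (m + 1), (m.choose j : ℝ) * (j + 1).factorial * y ^ j
        = ∫ t in Ioi (0:ℝ), Real.exp (-t) * t * (t*y+1)^m := by
    have hterm : ∀ j ∈ range (m+1), (m.choose j : ℝ) * (j + 1).factorial * y ^ j
        = ∫ t in Ioi (0:ℝ), (m.choose j : ℝ) * y ^ j * (Real.exp (-t) * t ^ (j+1)) := by
      intro j _
      rw [MeasureTheory.integral_const_mul, ← hfact j]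
      ring
    rw [Finset.sum_congr rfl hterm, ← MeasureTheory.integral_finset_sum]
    · congr 1
      funext t
      exact hpt t
    · intro j _
      exact (hint j).const_mul _
  rw [hswap]
  set f : ℝ → ℝ := fun t => Real.exp (-t) * t * (t*y+1)^m with hf
  have hfi : IntegrableOn f (Ioi (0:ℝ)) := by
    have h : IntegrableOn
        (fun t => ∑ j ∈ range (m+1), (m.choose j : ℝ) * y ^ j * (Real.exp (-t) * t ^ (j+1)))
        (Ioi (0:ℝ)) :=
      MeasureTheory.integrable_finset_sum _ fun j _ => (hint j).const_mul _
    exact h.congr_fun (fun t _ => hpt t) measurableSet_Ioi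
  have hnn : 0 ≤ᵐ[volume.restrict (Ioi (0:ℝ))] f := by
    filter_upwards [ae_restrict_mem measurableSet_Ioi] with t ht
    exact mul_nonneg (mul_nonneg (Real.exp_pos _).le (le_of_lt ht)) (hme.pow_nonneg _)
  rw [MeasureTheory.setIntegral_pos_iff_support_of_nonneg_ae hnn hfi]
  have hsub : Ioi (0:ℝ) \ {t : ℝ | t*y+1 = 0} ⊆ Function.support f ∩ Ioi 0 := by
    rintro t ⟨ht, hz⟩
    refine ⟨?_, ht⟩
    simp only [Function.mem_support, hf]
    have hz' : t*y+1 ≠ 0 := hz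
    exact mul_ne_zero (mul_ne_zero (Real.exp_ne_zero _) (ne_of_gt ht)) (pow_ne_zero _ hz')
  have hz0 : volume {t : ℝ | t*y+1 = 0} = 0 := by
    apply Set.Subsingleton.measure_zero
    intro a ha b hb
    simp only [mem_setOf_eq] at ha hb
    by_cases hy : y = 0
    · simp [hy] at ha
    · have hab : a * y = b * y := by linarith
      exact mul_right_cancel₀ hy hab
  calc (0:ENNReal) < volume (Ioi (0:ℝ) \ {t : ℝ | t*y+1 = 0}) := by
        rw [measure_diff_null hz0, Real.volume_Ioi]
        exact ENNReal.zero_lt_top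
    _ ≤ volume (Function.support f ∩ Ioi 0) := measure_mono hsub
end

section
/- Let m ≥ 2 be an even integer and define Q_m(y) = ∑_{j=0}^{m} C(m,j)·(j+1)!·y^j. Then there exists d_m > 0 such that Q_m(y) ≥ d_m · max{1, y^m} for all real y. -/
/-!
Since `(j + 1)! = ∫₀^∞ t ^ (j + 1) e⁻ᵗ dt`, the binomial theorem gives
`Q_m(y) = ∫₀^∞ t e⁻ᵗ (1 + t y) ^ m dt`, which is positive for even `m`: the integrand is
nonnegative and positive for small `t > 0`. As `|y| → ∞`, `Q_m(y) / y ^ m` tends to the leading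
coefficient `(m + 1)! > 1`, so `max 1 (y ^ m) ≤ Q_m(y)` off a compact set, and on that compact set
`max 1 (y ^ m) / Q_m(y)` is bounded.
-/

open Real Set Filter Topology MeasureTheory Finset
open scoped Nat

theorem integrableOn_pow_mul_exp_neg_Ioi (k : ℕ) :
    IntegrableOn (fun t : ℝ => t ^ k * exp (-t)) (Ioi 0) := by
  refine (GammaIntegral_convergent (s := k + 1) (by positivity)).congr_fun
    (fun t _ => ?_) measurableSet_Ioi
  simp [mul_comm, ← rpow_natCast]

theorem integral_pow_mul_exp_neg_Ioi (k : ℕ) :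
    ∫ t in Ioi (0 : ℝ), t ^ k * exp (-t) = k ! := by
  rw [← Gamma_nat_eq_factorial, Gamma_eq_integral (by positivity)]
  refine setIntegral_congr_fun measurableSet_Ioi fun t _ => ?_
  simp [mul_comm, ← rpow_natCast]

theorem mul_exp_neg_mul_one_add_mul_pow_eq_sum (m : ℕ) (y t : ℝ) :
    t * exp (-t) * (1 + t * y) ^ m =
      ∑ j ∈ range (m + 1), (m.choose j * y ^ j) * (t ^ (j + 1) * exp (-t)) := by
  rw [add_comm, add_pow, mul_sum]
  refine sum_congr rfl fun j _ => ?_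
  ring

theorem integrableOn_mul_exp_neg_mul_one_add_mul_pow (m : ℕ) (y : ℝ) :
    IntegrableOn (fun t => t * exp (-t) * (1 + t * y) ^ m) (Ioi 0) := by
  simp_rw [mul_exp_neg_mul_one_add_mul_pow_eq_sum]
  exact integrable_finsetSum _ fun j _ => (integrableOn_pow_mul_exp_neg_Ioi (j + 1)).const_mul _

theorem sum_choose_mul_factorial_mul_pow_eq_integral (m : ℕ) (y : ℝ) :
    ∑ j ∈ range (m + 1), (m.choose j : ℝ) * (j + 1)! * y ^ j =
      ∫ t in Ioi 0, t * exp (-t) * (1 + t * y) ^ m := by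
  simp_rw [mul_exp_neg_mul_one_add_mul_pow_eq_sum]
  rw [integral_finsetSum _ fun j _ => (integrableOn_pow_mul_exp_neg_Ioi (j + 1)).const_mul _]
  simp_rw [integral_const_mul, integral_pow_mul_exp_neg_Ioi]
  exact sum_congr rfl fun j _ => by ring

theorem integral_mul_exp_neg_mul_one_add_mul_pow_pos {m : ℕ} (hm : Even m) (y : ℝ) :
    0 < ∫ t in Ioi 0, t * exp (-t) * (1 + t * y) ^ m := by
  have hnonneg : ∀ t ∈ Ioi (0 : ℝ), 0 ≤ t * exp (-t) * (1 + t * y) ^ m := fun t ht =>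
    mul_nonneg (mul_nonneg (le_of_lt ht) (exp_pos _).le) (hm.pow_nonneg _)
  rw [setIntegral_pos_iff_support_of_nonneg_ae (ae_restrict_of_forall_mem measurableSet_Ioi hnonneg)
    (integrableOn_mul_exp_neg_mul_one_add_mul_pow m y)]
  have hsub : Ioo 0 (1 / (|y| + 1)) ⊆
      Function.support (fun t => t * exp (-t) * (1 + t * y) ^ m) ∩ Ioi 0 := by
    rintro t ⟨ht0, htδ⟩
    refine ⟨?_, ht0⟩
    have htδ' : t * (|y| + 1) < 1 := by rwa [lt_div_iff₀ (by positivity)] at htδ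
    have hbase : 0 < 1 + t * y := by nlinarith [neg_abs_le y]
    simp only [Function.mem_support]
    positivity
  refine lt_of_lt_of_le ?_ (measure_mono hsub)
  rw [Real.volume_Ioo, sub_zero, ENNReal.ofReal_pos]
  positivity

theorem eventually_max_one_pow_le_sum {m : ℕ} (hm : Even m) {c : ℕ → ℝ} (hc : 1 < c m) :
    ∀ᶠ y in cocompact ℝ, max 1 (y ^ m) ≤ ∑ j ∈ range (m + 1), c j * y ^ j := by
  let P : ℝ → ℝ := fun z => ∑ j ∈ range (m + 1), c j * z ^ (m - j)
  have hP0 : P 0 = c m := by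
    simp only [P]
    rw [Finset.sum_eq_single_of_mem m (self_mem_range_succ m) fun j hj hjm => ?_]
    · simp
    · have : m - j ≠ 0 := by have := mem_range.mp hj; omega
      simp [this]
  have hlim : Tendsto (fun y : ℝ => P y⁻¹) (cocompact ℝ) (𝓝 (c m)) := by
    rw [← hP0]
    exact ((by fun_prop : Continuous P).tendsto 0).comp
      (Metric.cobounded_eq_cocompact (α := ℝ) ▸ tendsto_inv₀_cobounded)
  filter_upwards [hlim.eventually (lt_mem_nhds hc),
    tendsto_norm_cocompact_atTop.eventually (eventually_ge_atTop 1)] with y hP hy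
  have hy0 : y ≠ 0 := by rintro rfl; norm_num at hy
  have hym : 1 ≤ y ^ m := by rw [← hm.pow_abs]; exact one_le_pow₀ hy
  have hsum : ∑ j ∈ range (m + 1), c j * y ^ j = y ^ m * P y⁻¹ := by
    rw [mul_sum]
    refine sum_congr rfl fun j hj => ?_
    rw [inv_pow, pow_sub₀ y hy0 (by have := mem_range.mp hj; omega)]
    field_simp
  rw [max_eq_right hym, hsum]
  exact le_mul_of_one_le_right (by linarith) hP.le

theorem exists_pos_mul_le_of_eventually_le {X : Type*} [TopologicalSpace X] {f g : X → ℝ}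
    (hf : Continuous f) (hg : Continuous g) (hf_pos : ∀ x, 0 < f x)
    (hle : g ≤ᶠ[cocompact X] f) : ∃ d, 0 < d ∧ ∀ x, d * g x ≤ f x := by
  obtain ⟨K, hK, hKle⟩ := mem_cocompact.mp hle
  obtain ⟨B, hB⟩ := hK.bddAbove_image (hg.div hf fun x => (hf_pos x).ne').continuousOn
  refine ⟨(max B 1)⁻¹, by positivity, fun x => ?_⟩
  rw [inv_mul_le_iff₀ (by positivity)]
  by_cases hx : x ∈ K
  · calc g x ≤ B * f x := (div_le_iff₀ (hf_pos x)).mp (hB ⟨x, hx, rfl⟩)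
      _ ≤ max B 1 * f x := mul_le_mul_of_nonneg_right (le_max_left B 1) (hf_pos x).le
  · calc g x ≤ f x := hKle hx
      _ ≤ max B 1 * f x := le_mul_of_one_le_left (hf_pos x).le (le_max_right _ _)

theorem stmt_1 (m : ℕ) (hm : 2 ≤ m) (hme : Even m) :
    ∃ d : ℝ, 0 < d ∧ ∀ y : ℝ,
      d * max 1 (y ^ m) ≤ ∑ j ∈ Finset.range (m + 1), (m.choose j : ℝ) * (j + 1).factorial * y ^ j := by
  have hlead : 1 < (m.choose m : ℝ) * (m + 1)! := by
    rw [Nat.choose_self, Nat.cast_one, one_mul]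
    exact_mod_cast Nat.one_lt_factorial.mpr (by omega)
  refine exists_pos_mul_le_of_eventually_le (by fun_prop) (by fun_prop) (fun y => ?_)
    (eventually_max_one_pow_le_sum hme (c := fun j => (m.choose j : ℝ) * (j + 1)!) hlead)
  rw [sum_choose_mul_factorial_mul_pow_eq_integral]
  exact integral_mul_exp_neg_mul_one_add_mul_pow_pos hme y
end

section
/- Let α ≠ β be complex numbers and let G be a function on the upper half-plane of the form G(z) = e^{2iz}(L(z)−i)/(L(z)+i), with s_γ(z) = (1/(2i))(L(z) − i − γe^{−2iz}(L(z)+i)) for γ ∈ {α, β}. If (z_n) is a sequence in H = {Im z > 0} with z_n → ∞ and |s_α(z_n)| + |s_β(z_n)| → 0, then G(z_n) is bounded and G(z_n) → α and G(z_n) → β, a contradiction; hence there is c₁ > 0 with |s_α(z)| + |s_β(z)| ≥ c₁ for all z ∈ H of sufficiently large modulus. -/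
/-! With `w = e^{2iz}`, the functions `s_γ` satisfy the exact identity
`w (s_α - s_β) + α s_β - β s_α = β - α`, in which `L` cancels. On the closed upper half-plane
`|w| ≤ 1`, so `|β - α| ≤ (1 + |α| + |β|) (|s_α| + |s_β|)` there, for every `z`. -/

open Complex

lemma norm_sub_le_of_mul_sub_add_sub_eq {R : Type*} [SeminormedRing R] {w u v a b : R}
    (hw : ‖w‖ ≤ 1) (h : w * (u - v) + a * v - b * u = b - a) :
    ‖b - a‖ ≤ (1 + ‖a‖ + ‖b‖) * (‖u‖ + ‖v‖) := by
  calc ‖b - a‖ = ‖w * (u - v) + a * v - b * u‖ := by rw [h]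
    _ ≤ ‖w‖ * (‖u‖ + ‖v‖) + ‖a‖ * ‖v‖ + ‖b‖ * ‖u‖ := by
      grw [norm_sub_le, norm_add_le, norm_mul_le, norm_mul_le, norm_mul_le, norm_sub_le]
    _ ≤ 1 * (‖u‖ + ‖v‖) + ‖a‖ * ‖v‖ + ‖b‖ * ‖u‖ := by gcongr
    _ ≤ (1 + ‖a‖ + ‖b‖) * (‖u‖ + ‖v‖) := by
      nlinarith [norm_nonneg u, norm_nonneg v, norm_nonneg a, norm_nonneg b]

lemma mul_sub_add_sub_eq_of_ne_zero {w : ℂ} (hw : w ≠ 0) (L α β : ℂ) :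
    let s : ℂ → ℂ := fun γ ↦ (1 / (2 * I)) * (L - I - γ * w⁻¹ * (L + I))
    w * (s α - s β) + α * s β - β * s α = β - α := by
  field_simp
  ring

lemma norm_exp_two_mul_I_mul_le_one {z : ℂ} (hz : 0 ≤ z.im) : ‖exp (2 * I * z)‖ ≤ 1 := by
  rw [norm_exp, Real.exp_le_one_iff]
  simpa using hz

theorem stmt_14 (L : ℂ → ℂ) (α β : ℂ) (hαβ : α ≠ β)
    (s : ℂ → ℂ → ℂ)
    (hs : ∀ γ z, s γ z = (1 / (2 * Complex.I))
        * (L z - Complex.I - γ * Complex.exp (-2 * Complex.I * z) * (L z + Complex.I))) :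
    ∃ c₁ : ℝ, 0 < c₁ ∧ ∃ R : ℝ, ∀ z : ℂ, 0 < z.im → R ≤ ‖z‖ →
      c₁ ≤ ‖s α z‖ + ‖s β z‖ := by
  have hM : 0 < 1 + ‖α‖ + ‖β‖ := by positivity
  have hβα : 0 < ‖β - α‖ := norm_pos_iff.mpr (sub_ne_zero.mpr hαβ.symm)
  refine ⟨‖β - α‖ / (1 + ‖α‖ + ‖β‖), div_pos hβα hM, 0, fun z hz _ ↦ ?_⟩
  have hexp : exp (-2 * I * z) = (exp (2 * I * z))⁻¹ := by rw [← exp_neg]; ring_nf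
  have hid : exp (2 * I * z) * (s α z - s β z) + α * s β z - β * s α z = β - α := by
    simpa only [hs, hexp] using mul_sub_add_sub_eq_of_ne_zero (exp_ne_zero _) (L z) α β
  rw [div_le_iff₀' hM]
  exact norm_sub_le_of_mul_sub_add_sub_eq (norm_exp_two_mul_I_mul_le_one hz.le) hid
end

section
/- Every solution z ∈ ℂ of tan z = z is real; that is, all fixed points of tan are real. -/
open Complex

/-- For `t > 0`, `sinh t < t * cosh t`. -/
lemma sinh_lt_mul_cosh {t : ℝ} (ht : 0 < t) : Real.sinh t < t * Real.cosh t := by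
  have hmono : StrictMonoOn (fun u : ℝ => u * Real.cosh u - Real.sinh u) (Set.Ici 0) := by
    apply strictMonoOn_of_deriv_pos (convex_Ici 0)
    · fun_prop
    · intro u hu
      rw [interior_Ici] at hu
      have hd : HasDerivAt (fun u : ℝ => u * Real.cosh u - Real.sinh u)
          (1 * Real.cosh u + u * Real.sinh u - Real.cosh u) u :=
        ((hasDerivAt_id u).mul (Real.hasDerivAt_cosh u)).sub (Real.hasDerivAt_sinh u)
      rw [hd.deriv]
      have hu' : (0:ℝ) < u := hu
      have := Real.sinh_pos_iff.2 hu'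
      nlinarith [mul_pos hu' this]
  have := hmono (Set.self_mem_Ici) (Set.mem_Ici.2 ht.le) ht
  simpa using this

/-- No fixed point of tan in the upper half plane. -/
lemma aux_no_upper (z : ℂ) (hz : Complex.tan z = z) : z.im ≤ 0 := by
  by_contra hy'
  push_neg at hy'
  have hc : Complex.cos z ≠ 0 := by
    intro h0
    rw [Complex.tan_eq_sin_div_cos, h0, div_zero] at hz
    rw [← hz] at hy'
    simp at hy'
  have hsz : Complex.sin z = z * Complex.cos z := by
    rw [Complex.tan_eq_sin_div_cos, div_eq_iff hc] at hz
    exact hz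
  set x := z.re with hx
  set y := z.im with hyy
  have hz' : z = (x : ℂ) + (y : ℂ) * I := (re_add_im z).symm
  rw [hz', Complex.sin_add, Complex.cos_add, Complex.sin_mul_I, Complex.cos_mul_I,
    ← Complex.ofReal_sin, ← Complex.ofReal_cos, ← Complex.ofReal_sinh,
    ← Complex.ofReal_cosh] at hsz
  set s := Real.sin x with hs
  set c := Real.cos x with hcc
  set S := Real.sinh y with hSd
  set C := Real.cosh y with hCd
  rw [Complex.ext_iff] at hsz
  simp only [Complex.add_re, Complex.add_im, Complex.mul_re, Complex.mul_im, Complex.I_re,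
    Complex.I_im, Complex.ofReal_re, Complex.ofReal_im, Complex.sub_re, Complex.sub_im] at hsz
  obtain ⟨hre, him⟩ := hsz
  have pyth : s ^ 2 + c ^ 2 = 1 := Real.sin_sq_add_cos_sq x
  have hyp : C ^ 2 - S ^ 2 = 1 := Real.cosh_sq_sub_sinh_sq y
  have hI : x * (c ^ 2 * C ^ 2 + s ^ 2 * S ^ 2) = s * c := by
    linear_combination (-(c * C)) * hre + (s * S) * him + (s * c) * hyp
  have hII : y * (c ^ 2 * C ^ 2 + s ^ 2 * S ^ 2) = S * C := by
    linear_combination (-(s * S)) * hre + (-(c * C)) * him + (S * C) * pyth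
  have hyS : y < S := Real.self_lt_sinh_iff.2 hy'
  have hC1 : 1 < C := Real.one_lt_cosh.2 (ne_of_gt hy')
  have hSC : S < y * C := sinh_lt_mul_cosh hy'
  set D := c ^ 2 * C ^ 2 + s ^ 2 * S ^ 2 with hD
  have hD1 : 1 < D := by nlinarith
  have hsx : |s| ≤ |x| := Real.abs_sin_le_abs
  have hcx : |c| ≤ 1 := Real.abs_cos_le_one x
  have hDpos : 0 < D := lt_trans one_pos hD1
  have hx0 : x = 0 := by
    by_contra hx0
    have h1 : |x| * D = |s| * |c| := by
      rw [← abs_of_pos hDpos, ← abs_mul, hI, abs_mul]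
    have h2 : |s| * |c| ≤ |x| * 1 := by
      apply mul_le_mul hsx hcx (abs_nonneg _) (abs_nonneg _)
    have hxpos : 0 < |x| := abs_pos.2 hx0
    nlinarith
  have hs0 : s = 0 := by
    rw [hs, hx0, Real.sin_zero]
  have hc2 : c ^ 2 = 1 := by nlinarith
  have hkey : y * C ^ 2 = S * C := by
    rw [← hII, hD, hs0, hc2]; ring
  have hCpos : 0 < C := lt_trans one_pos hC1
  nlinarith

theorem stmt_15 (z : ℂ) (hz : Complex.tan z = z) : z.im = 0 := by
  have h1 := aux_no_upper z hz
  have h2 : Complex.tan (-z) = -z := by rw [Complex.tan_neg, hz]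
  have h3 := aux_no_upper (-z) h2
  simp at h3
  linarith
end

section
/- Let S(r) be an unbounded positive non-decreasing right-continuous function on [1, ∞), let A > 1, B > 1 and G = {r ≥ 1 : S(Ar) ≥ B·S(r)}. Then the upper logarithmic density of G satisfies limsup_{r→∞} (1/log r)·∫_{[1,r]∩G} dt/t ≤ (log A / log B)·limsup_{r→∞} (log⁺ S(r))/log r. -/
/-!
Put `φ = log S`, extended to a monotone function on `ℝ`. On `G` one has
`log B ≤ φ (A t) - φ t`, so `log B · ∫_{[1,r] ∩ G} dt/t ≤ ∫_1^r (φ (A t) - φ t) dt/t`, and the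
substitution `u = A t` telescopes the right-hand side to `∫_r^{Ar} φ(u) du/u` up to a constant,
which is at most `log A · log⁺ S (A r)`. Dividing by `log r` and using `log (A r) ~ log r` gives the
bound on the upper logarithmic density.
-/

open Filter MeasureTheory Set intervalIntegral Real
open scoped Interval

theorem EReal.le_coe_mul_of_forall_lt {X L : EReal} {c : ℝ} (hc : 0 < c)
    (h : ∀ M : ℝ, L < M → X ≤ ((c * M : ℝ) : EReal)) : X ≤ c * L := by
  refine le_of_forall_gt_imp_ge_of_dense fun y hy => ?_
  induction y using EReal.rec with
  | bot => exact absurd hy not_lt_bot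
  | top => exact le_top
  | coe y =>
    have hL : L < ((y / c : ℝ) : EReal) := by
      rw [EReal.coe_div, EReal.lt_div_iff (by exact_mod_cast hc) (EReal.coe_ne_top c), mul_comm]
      exact hy
    simpa only [mul_div_cancel₀ y hc.ne'] using h _ hL

theorem limsup_div_log_le_of_eventually_le {f : ℝ → ℝ} {a b : ℝ}
    (h : ∀ᶠ r in atTop, f r ≤ a * log r + b) :
    limsup (fun r => ((f r / log r : ℝ) : EReal)) atTop ≤ a := by
  have htend : Tendsto (fun r => ((a + b / log r : ℝ) : EReal)) atTop (nhds (a : EReal)) := by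
    have := ((tendsto_const_nhds (x := b)).div_atTop tendsto_log_atTop).const_add a
    rw [add_zero] at this
    exact (continuous_coe_real_ereal.tendsto _).comp this
  calc limsup (fun r => ((f r / log r : ℝ) : EReal)) atTop
      ≤ limsup (fun r => ((a + b / log r : ℝ) : EReal)) atTop := by
        refine limsup_le_limsup ?_
        filter_upwards [h, eventually_gt_atTop 1] with r hr hr1
        have hlog := log_pos hr1
        rw [EReal.coe_le_coe_iff, div_le_iff₀ hlog, add_mul, div_mul_cancel₀ b hlog.ne']
        linarith
    _ = a := htend.limsup_eq

theorem limsup_div_log_le_mul_limsup_comp_mul {f P : ℝ → ℝ} {A c C : ℝ} (hA : 0 < A)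
    (hc : 0 < c) (h : ∀ᶠ r in atTop, f r ≤ c * P (A * r) + C) :
    limsup (fun r => ((f r / log r : ℝ) : EReal)) atTop
      ≤ c * limsup (fun r => ((P r / log r : ℝ) : EReal)) atTop := by
  refine EReal.le_coe_mul_of_forall_lt hc fun M hM => ?_
  have hPM : ∀ᶠ r in atTop, P r ≤ M * log r := by
    filter_upwards [eventually_lt_of_limsup_lt hM, eventually_gt_atTop 1] with r hr hr1
    exact (div_le_iff₀ (log_pos hr1)).1 (by exact_mod_cast hr.le)
  refine limsup_div_log_le_of_eventually_le (b := c * M * log A + C) ?_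
  filter_upwards [h, (tendsto_id.const_mul_atTop hA).eventually hPM, eventually_gt_atTop 0]
    with r hr hPr hr0
  rw [id, log_mul hA.ne' hr0.ne'] at hPr
  nlinarith [mul_le_mul_of_nonneg_left hPr hc.le]

theorem MeasureTheory.setIntegral_inter_le_setIntegral {X : Type*} [MeasurableSpace X]
    {μ : Measure X} {f g : X → ℝ} {s G : Set X} (hs : MeasurableSet s) (hG : MeasurableSet G)
    (hf : IntegrableOn f s μ) (hg : IntegrableOn g s μ) (hg0 : ∀ x ∈ s, 0 ≤ g x)
    (hfg : ∀ x ∈ s ∩ G, f x ≤ g x) :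
    ∫ x in s ∩ G, f x ∂μ ≤ ∫ x in s, g x ∂μ :=
  (setIntegral_mono_on (hf.mono_set inter_subset_left) (hg.mono_set inter_subset_left)
    (hs.inter hG) hfg).trans
    (setIntegral_mono_set hg (ae_restrict_of_forall_mem hs hg0) inter_subset_left.eventuallyLE)

namespace Monotone

variable {φ : ℝ → ℝ}

theorem intervalIntegrable_div (hφ : Monotone φ) {a b : ℝ} (ha : 0 < a) (hb : 0 < b) :
    IntervalIntegrable (fun u => φ u / u) volume a b := by
  simp only [div_eq_mul_inv]
  refine hφ.intervalIntegrable.mul_continuousOn (continuousOn_inv₀.mono fun x hx => ?_)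
  exact (lt_min ha hb).trans_le hx.1 |>.ne'

theorem comp_const_mul (hφ : Monotone φ) {A : ℝ} (hA : 0 ≤ A) : Monotone fun t => φ (A * t) :=
  fun _ _ h => hφ (mul_le_mul_of_nonneg_left h hA)

theorem integral_sub_comp_mul_div (hφ : Monotone φ) {A a r : ℝ} (hA : 0 < A) (ha : 0 < a)
    (hr : 0 < r) :
    ∫ t in a..r, (φ (A * t) - φ t) / t
      = (∫ u in r..A * r, φ u / u) - ∫ u in a..A * a, φ u / u := by
  have hscale : ∫ t in a..r, φ (A * t) / t = ∫ u in A * a..A * r, φ u / u := by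
    have hpt : ∀ t, φ (A * t) / t = A * (φ (A * t) / (A * t)) := fun t => by
      rw [← mul_div_assoc, mul_div_mul_left _ _ hA.ne']
    simp_rw [hpt]
    rw [intervalIntegral.integral_const_mul, integral_comp_mul_left (fun u => φ u / u) hA.ne',
      smul_eq_mul, mul_inv_cancel_left₀ hA.ne']
  simp_rw [sub_div]
  have hAa : 0 < A * a := mul_pos hA ha
  rw [integral_sub ((hφ.comp_const_mul hA.le).intervalIntegrable_div ha hr)
    (hφ.intervalIntegrable_div ha hr), hscale, integral_interval_sub_interval_comm'
    (hφ.intervalIntegrable_div hAa (mul_pos hA hr)) (hφ.intervalIntegrable_div ha hr)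
    (hφ.intervalIntegrable_div hAa ha)]

theorem integral_div_le_mul_log (hφ : Monotone φ) {A r : ℝ} (hA : 1 ≤ A) (hr : 0 < r) :
    ∫ u in r..A * r, φ u / u ≤ φ (A * r) * log A := by
  have hrAr : r ≤ A * r := le_mul_of_one_le_left hr.le hA
  have h0 : (0 : ℝ) ∉ [[r, A * r]] := fun h => by
    rw [uIcc_of_le hrAr] at h
    exact hr.not_ge h.1
  calc ∫ u in r..A * r, φ u / u ≤ ∫ u in r..A * r, φ (A * r) * u⁻¹ := by
        refine integral_mono_on hrAr (hφ.intervalIntegrable_div hr (hr.trans_le hrAr))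
          ((intervalIntegrable_inv (fun x hx h => h0 (h ▸ hx)) continuousOn_id).const_mul _)
          fun u hu => ?_
        rw [div_eq_mul_inv]
        exact mul_le_mul_of_nonneg_right (hφ hu.2) (inv_nonneg.2 (hr.trans_le hu.1).le)
    _ = φ (A * r) * log A := by
        rw [intervalIntegral.integral_const_mul, integral_inv h0, mul_div_cancel_right₀ A hr.ne']

end Monotone

theorem exists_forall_log_mul_integral_le (S : ℝ → ℝ) {A B : ℝ} (hA : 1 < A) (hB : 1 < B)
    (hpos : ∀ r : ℝ, 1 ≤ r → 0 < S r) (hmono : MonotoneOn S (Ici 1)) :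
    ∃ C : ℝ, ∀ r : ℝ, 1 ≤ r →
      log B * ∫ t in Icc 1 r ∩ {u : ℝ | 1 ≤ u ∧ B * S u ≤ S (A * u)}, (1 / t)
        ≤ log A * max (log (S (A * r))) 0 + C := by
  set φ : ℝ → ℝ := fun t => log (S (max t 1))
  have hφ : Monotone φ := fun x y h =>
    log_le_log (hpos _ (le_max_right _ _))
      (hmono (mem_Ici.2 (le_max_right _ _)) (mem_Ici.2 (le_max_right _ _)) (max_le_max_right 1 h))
  have hφS : ∀ t, 1 ≤ t → φ t = log (S t) := fun t ht => by simp only [φ, max_eq_left ht]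
  have hG : {u : ℝ | 1 ≤ u ∧ B * S u ≤ S (A * u)} = Ici 1 ∩ {u | log B ≤ φ (A * u) - φ u} := by
    ext u
    simp only [mem_ofPred_eq, mem_inter_iff, mem_Ici, and_congr_right_iff]
    intro hu
    have hAu : 1 ≤ A * u := one_le_mul_of_one_le_of_one_le hA.le hu
    rw [hφS u hu, hφS _ hAu, le_sub_iff_add_le, ← log_mul (by positivity) (hpos u hu).ne',
      log_le_log_iff (mul_pos (by positivity) (hpos u hu)) (hpos _ hAu)]
  have hGmeas : MeasurableSet {u : ℝ | 1 ≤ u ∧ B * S u ≤ S (A * u)} := by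
    rw [hG]
    exact measurableSet_Ici.inter (measurableSet_le measurable_const
      ((hφ.comp_const_mul (by positivity)).measurable.sub hφ.measurable))
  refine ⟨-∫ u in (1 : ℝ)..A, φ u / u, fun r hr => ?_⟩
  have hr0 : 0 < r := one_pos.trans_le hr
  have hψ : IntegrableOn (fun t => (φ (A * t) - φ t) / t) (Icc 1 r) := by
    rw [← intervalIntegrable_iff_integrableOn_Icc_of_le hr]
    simp_rw [sub_div]
    exact ((hφ.comp_const_mul (by positivity)).intervalIntegrable_div one_pos hr0).sub
      (hφ.intervalIntegrable_div one_pos hr0)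
  calc log B * ∫ t in Icc 1 r ∩ {u : ℝ | 1 ≤ u ∧ B * S u ≤ S (A * u)}, (1 / t)
      = ∫ t in Icc 1 r ∩ {u : ℝ | 1 ≤ u ∧ B * S u ≤ S (A * u)}, log B / t := by
        rw [← MeasureTheory.integral_const_mul]
        simp only [mul_one_div]
    _ ≤ ∫ t in Icc 1 r, (φ (A * t) - φ t) / t := by
        refine setIntegral_inter_le_setIntegral measurableSet_Icc hGmeas
          ((continuousOn_const.div continuousOn_id fun t ht =>
            (one_pos.trans_le ht.1).ne').integrableOn_Icc) hψ
          (fun t ht => div_nonneg (sub_nonneg.2 (hφ ?_)) (one_pos.trans_le ht.1).le)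
          fun t ⟨ht, htG⟩ => ?_
        · exact le_mul_of_one_le_left (one_pos.trans_le ht.1).le hA.le
        · rw [hG] at htG
          exact div_le_div_of_nonneg_right htG.2 (one_pos.trans_le ht.1).le
    _ = (∫ u in r..A * r, φ u / u) - ∫ u in (1 : ℝ)..A, φ u / u := by
        rw [integral_Icc_eq_integral_Ioc, ← integral_of_le hr,
          hφ.integral_sub_comp_mul_div (by positivity) one_pos hr0, mul_one]
    _ ≤ log A * max (log (S (A * r))) 0 + -∫ u in (1 : ℝ)..A, φ u / u := by
        have hAr : 1 ≤ A * r := one_le_mul_of_one_le_of_one_le hA.le hr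
        have := hφ.integral_div_le_mul_log hA.le hr0
        rw [hφS _ hAr] at this
        nlinarith [le_max_left (log (S (A * r))) 0, log_nonneg hA.le]

theorem stmt_18_general (S : ℝ → ℝ) (A B : ℝ) (hA : 1 < A) (hB : 1 < B)
    (hpos : ∀ r : ℝ, 1 ≤ r → 0 < S r)
    (hmono : MonotoneOn S (Set.Ici 1)) :
    Filter.limsup
        (fun r : ℝ =>
          (((∫ t in Set.Icc 1 r ∩ {u : ℝ | 1 ≤ u ∧ B * S u ≤ S (A * u)}, (1 / t))
            / Real.log r : ℝ) : EReal))
        Filter.atTop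
      ≤ ((Real.log A / Real.log B : ℝ) : EReal)
        * Filter.limsup
            (fun r : ℝ => ((max (Real.log (S r)) 0 / Real.log r : ℝ) : EReal))
            Filter.atTop := by
  obtain ⟨C, hC⟩ := exists_forall_log_mul_integral_le S hA hB hpos hmono
  have hlogB : 0 < log B := log_pos hB
  refine limsup_div_log_le_mul_limsup_comp_mul (C := C / log B) (one_pos.trans hA)
    (div_pos (log_pos hA) hlogB) ?_
  filter_upwards [eventually_ge_atTop 1] with r hr
  rw [div_mul_eq_mul_div, ← add_div, le_div_iff₀ hlogB, mul_comm]
  linarith [hC r hr]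

theorem stmt_18 (S : ℝ → ℝ) (A B : ℝ) (hA : 1 < A) (hB : 1 < B)
    (hpos : ∀ r : ℝ, 1 ≤ r → 0 < S r)
    (hmono : MonotoneOn S (Set.Ici 1))
    (hrc : ∀ r : ℝ, 1 ≤ r → ContinuousWithinAt S (Set.Ici r) r)
    (hunb : ¬ BddAbove (S '' Set.Ici 1)) :
    Filter.limsup
        (fun r : ℝ =>
          (((∫ t in Set.Icc 1 r ∩ {u : ℝ | 1 ≤ u ∧ B * S u ≤ S (A * u)}, (1 / t))
            / Real.log r : ℝ) : EReal))
        Filter.atTop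
      ≤ ((Real.log A / Real.log B : ℝ) : EReal)
        * Filter.limsup
            (fun r : ℝ => ((max (Real.log (S r)) 0 / Real.log r : ℝ) : EReal))
            Filter.atTop :=
  stmt_18_general S A B hA hB hpos hmono
end
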